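/- arXiv:1905.03857 — 3 statements merged into one kernel-verified Lean document; each statement's English description precedes it below -/
import Mathlib

section
/- Let K ≥ 2 be a natural number and let g, ρ : Fin K → ℕ be monotone nondecreasing (sorted) vectors. If ξ(g) = ξ(ρ), i.e., ∑_{k} K^{−g(k)} = ∑_{k} K^{−ρ(k)}, then g = ρ. In other words, ξ is injective on sorted vectors in ℕ^K. -/
/-!
Compare `g` and `ρ` at the first index `j` where they differ, say `g j < ρ j`. The common prefix
cancels in `ξ`. On the tail `k ≥ j` every exponent of `ρ` is at least `g j + 1` by monotonicity,
so the at most `K` tail terms of `ξ(ρ)` add up to at most `K · K^{-(g j + 1)} = K^{-g j}`, a single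
tail term of `ξ(g)`; the inequality is strict because either the tail has another term or it
has only one and then `K^{-ρ j} < K^{-g j}`. Hence `ξ` strictly reverses the lexicographic order.
-/

open Finset

/-- The separable objective `ξ(v) = ∑ k, K^{-v k}`. -/
noncomputable def xi (K : ℕ) (v : Fin K → ℕ) : ℝ :=
  ∑ k : Fin K, ((K : ℝ))⁻¹ ^ v k

lemma sum_pow_lt_sum_pow_of_lt {ι : Type*} {s : Finset ι} {r : ℝ} (hr₀ : 0 < r) (hr₁ : r < 1)
    (hs : #s * r ≤ 1) {f h : ι → ℕ} {j : ι} (hj : j ∈ s) (hlt : ∀ k ∈ s, f j < h k) :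
    ∑ k ∈ s, r ^ h k < ∑ k ∈ s, r ^ f k := by
  have hupper : ∑ k ∈ s, r ^ h k ≤ #s * r ^ (f j + 1) := by
    rw [← nsmul_eq_mul]
    exact sum_le_card_nsmul _ _ _ fun k hk ↦ pow_le_pow_of_le_one hr₀.le hr₁.le (hlt k hk)
  refine hupper.trans_lt ?_
  rcases (one_le_card.mpr ⟨j, hj⟩).eq_or_lt with hcard | hcard
  · calc (#s : ℝ) * r ^ (f j + 1) = r ^ (f j + 1) := by rw [← hcard, Nat.cast_one, one_mul]
      _ < r ^ f j := pow_lt_pow_right_of_lt_one₀ hr₀ hr₁ (Nat.lt_succ_self _)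
      _ ≤ ∑ k ∈ s, r ^ f k := single_le_sum (f := fun k ↦ r ^ f k) (fun k _ ↦ by positivity) hj
  · obtain ⟨m, hm, hmj⟩ := exists_mem_ne hcard j
    calc (#s : ℝ) * r ^ (f j + 1) = #s * r * r ^ f j := by ring
      _ ≤ r ^ f j := mul_le_of_le_one_left (by positivity) hs
      _ < ∑ k ∈ s, r ^ f k :=
        single_lt_sum (f := fun k ↦ r ^ f k) hmj hj hm (by positivity) fun k _ _ ↦ by positivity

lemma xi_lt_xi_of_toLex_lt {K : ℕ} (hK : 2 ≤ K) {g ρ : Fin K → ℕ} (hρ : Monotone ρ)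
    (hgρ : toLex g < toLex ρ) : xi K ρ < xi K g := by
  obtain ⟨j, hpre, hlt⟩ : ∃ j, (∀ k < j, g k = ρ k) ∧ g j < ρ j := hgρ
  have hr₀ : (0 : ℝ) < (K : ℝ)⁻¹ := by positivity
  have hr₁ : (K : ℝ)⁻¹ < 1 := inv_lt_one_of_one_lt₀ (by exact_mod_cast hK)
  have htail : #(univ.filter fun k ↦ ¬k < j) * (K : ℝ)⁻¹ ≤ 1 := by
    rw [← div_eq_mul_inv, div_le_one (by positivity)]
    exact_mod_cast (card_le_univ _).trans_eq (Fintype.card_fin K)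
  unfold xi
  rw [← sum_filter_add_sum_filter_not univ (· < j),
    ← sum_filter_add_sum_filter_not univ (· < j) (fun k ↦ (K : ℝ)⁻¹ ^ g k),
    sum_congr rfl fun k hk ↦ by rw [← hpre k (mem_filter.mp hk).2]]
  refine add_lt_add_right (sum_pow_lt_sum_pow_of_lt hr₀ hr₁ htail (j := j) (by simp)
    fun k hk ↦ ?_) _
  exact hlt.trans_le (hρ (not_lt.mp (mem_filter.mp hk).2))

/-- `ξ` is injective on sorted vectors in `ℕ^K`. -/
theorem stmt_3 (K : ℕ) (hK : 2 ≤ K) (g ρ : Fin K → ℕ)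
    (hg : Monotone g) (hρ : Monotone ρ)
    (heq : xi K g = xi K ρ) :
    g = ρ := by
  rcases lt_trichotomy (toLex g) (toLex ρ) with hlt | heq' | hgt
  · exact absurd heq (xi_lt_xi_of_toLex_lt hK hρ hlt).ne'
  · exact heq'
  · exact absurd heq (xi_lt_xi_of_toLex_lt hK hg hgt).ne
end

section
/- Let K ≥ 2 be a natural number and let S be a finite nonempty set of monotone nondecreasing (sorted) vectors in Fin K → ℕ. For v ∈ S, the following are equivalent: (1) v minimizes ξ over S, i.e., ξ(v) ≤ ξ(w) for all w ∈ S; (2) v is lexicographically maximal in S, i.e., w ≤ v in the lexicographic order for all w ∈ S. -/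
open Finset

lemma sum_Ici_pow_le_of_monotone {n : ℕ} {r : ℝ} (hr0 : 0 ≤ r) (hr1 : r ≤ 1)
    {v : Fin n → ℕ} (hv : Monotone v) (i : Fin n) :
    ∑ k ∈ Ici i, r ^ v k ≤ (n - i : ℕ) * r ^ v i := by
  rw [← Fin.card_Ici, ← nsmul_eq_mul]
  exact sum_le_card_nsmul _ _ _ fun k hk ↦ pow_le_pow_of_le_one hr0 hr1 (hv (mem_Ici.mp hk))

lemma xi_eq_sum_compl_Ici_add_sum_Ici (K : ℕ) (v : Fin K → ℕ) (i : Fin K) :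
    xi K v = ∑ k ∈ (Ici i)ᶜ, (K : ℝ)⁻¹ ^ v k + ∑ k ∈ Ici i, (K : ℝ)⁻¹ ^ v k :=
  (sum_compl_add_sum _ _).symm

theorem xi_lt_xi_of_toLex_lt_s4 {K : ℕ} (hK : 2 ≤ K) {v w : Fin K → ℕ} (hv : Monotone v)
    (h : toLex w < toLex v) : xi K v < xi K w := by
  obtain ⟨i, hprefix, hi⟩ := h
  change ∀ j < i, w j = v j at hprefix
  change w i < v i at hi
  set r : ℝ := (K : ℝ)⁻¹
  have hK0 : (0 : ℝ) < K := by positivity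
  have hr0 : 0 < r := by positivity
  have hr1 : r ≤ 1 := inv_le_one_of_one_le₀ (by exact_mod_cast one_le_two.trans hK)
  have hprefix_eq : ∑ k ∈ (Ici i)ᶜ, r ^ v k = ∑ k ∈ (Ici i)ᶜ, r ^ w k :=
    sum_congr rfl fun k hk ↦ by rw [hprefix k (by simpa using hk)]
  have hKr : (K : ℝ) * r ^ (w i + 1) = r ^ w i := by
    rw [pow_succ', ← mul_assoc, mul_inv_cancel₀ hK0.ne', one_mul]
  have htail_v : ∑ k ∈ Ici i, r ^ v k ≤ (K - i : ℕ) * r ^ (w i + 1) :=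
    (sum_Ici_pow_le_of_monotone hr0.le hr1 hv i).trans <|
      mul_le_mul_of_nonneg_left (pow_le_pow_of_le_one hr0.le hr1 hi) (by positivity)
  have htail_w : r ^ w i ≤ ∑ k ∈ Ici i, r ^ w k :=
    single_le_sum (f := fun k ↦ r ^ w k) (fun k _ ↦ by positivity) (mem_Ici.mpr le_rfl)
  rw [xi_eq_sum_compl_Ici_add_sum_Ici, xi_eq_sum_compl_Ici_add_sum_Ici K w i, hprefix_eq]
  gcongr ?_ + ?_
  rcases Nat.eq_zero_or_pos i with hi0 | hi0
  · let one : Fin K := ⟨1, hK⟩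
    have hpair : r ^ w i + r ^ w one ≤ ∑ k ∈ Ici i, r ^ w k := by
      have hne : i ≠ one := fun h ↦ by simp [Fin.ext_iff, one, hi0] at h
      rw [← sum_pair (f := fun k ↦ r ^ w k) hne]
      exact sum_le_sum_of_subset_of_nonneg (by intro k; simp [Fin.le_def, hi0])
        fun k _ _ ↦ by positivity
    have : (0 : ℝ) < r ^ w one := by positivity
    calc ∑ k ∈ Ici i, r ^ v k ≤ (K : ℝ) * r ^ (w i + 1) := by simpa [hi0] using htail_v
      _ < ∑ k ∈ Ici i, r ^ w k := by linarith
  · have hcard : ((K - i : ℕ) : ℝ) < K := by exact_mod_cast Nat.sub_lt (by omega) hi0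
    calc ∑ k ∈ Ici i, r ^ v k ≤ (K - i : ℕ) * r ^ (w i + 1) := htail_v
      _ < K * r ^ (w i + 1) := by gcongr
      _ ≤ ∑ k ∈ Ici i, r ^ w k := hKr ▸ htail_w

theorem stmt_4_general (K : ℕ) (hK : 2 ≤ K) (S : Finset (Fin K → ℕ))
    (hsorted : ∀ w ∈ S, Monotone w) (v : Fin K → ℕ) (hv : v ∈ S) :
    (∀ w ∈ S, xi K v ≤ xi K w) ↔ (∀ w ∈ S, toLex w ≤ toLex v) := by
  constructor
  · intro hmin w hw
    by_contra! hlt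
    exact (hmin w hw).not_gt (xi_lt_xi_of_toLex_lt_s4 hK (hsorted w hw) hlt)
  · intro hmax w hw
    rcases (hmax w hw).eq_or_lt with heq | hlt
    · rw [toLex_inj.mp heq]
    · exact (xi_lt_xi_of_toLex_lt_s4 hK (hsorted v hv) hlt).le

/-- Over a finite nonempty set of sorted vectors, minimizing `ξ` is equivalent to
lexicographic maximization. -/
theorem stmt_4 (K : ℕ) (hK : 2 ≤ K) (S : Finset (Fin K → ℕ)) (hS : S.Nonempty)
    (hsorted : ∀ w ∈ S, Monotone w) (v : Fin K → ℕ) (hv : v ∈ S) :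
    (∀ w ∈ S, xi K v ≤ xi K w) ↔ (∀ w ∈ S, toLex w ≤ toLex v) :=
  stmt_4_general K hK S hsorted v hv
end

section
/- Let N and J be natural numbers and let P be the set of real N × J matrices x such that x(n,j) ≥ 0 for all n, j; ∑_{j} x(n,j) = 1 for every row n; and ∑_{n} x(n,j) ≤ 1 for every column j. Then a matrix x is an extreme point of P if and only if there exists an injective function σ : Fin N → Fin J such that x(n,j) = 1 if j = σ(n) and x(n,j) = 0 otherwise. In particular, if P has an extreme point then N ≤ J. -/
/-!
Every point of the polytope is the top block of a doubly stochastic matrix: the rows missing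
from a square matrix are filled in uniformly with the column deficits. By Birkhoff's theorem that
square matrix is a convex combination of permutation matrices, whose top blocks are exactly the
matrices of injective assignments. Hence the polytope is the convex hull of these 0-1 matrices, so
its extreme points are among them; conversely a 0-1 matrix is already extreme in the unit cube.
-/

open Finset Function Matrix

variable {m n : Type*}

lemma mem_extremePoints_of_forall_eq_zero_or_one {S : Set (Matrix m n ℝ)} {x : Matrix m n ℝ}
    (hS : ∀ y ∈ S, ∀ i j, y i j ∈ Set.Icc 0 1) (hx : x ∈ S)
    (h01 : ∀ i j, x i j = 0 ∨ x i j = 1) :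
    x ∈ Set.extremePoints ℝ S := by
  have hcube : x ∈ Set.extremePoints ℝ
      (Set.univ.pi fun (_ : m) => Set.univ.pi fun (_ : n) => Set.Icc (0 : ℝ) 1) := by
    rw [extremePoints_pi]
    refine fun i _ => ?_
    rw [extremePoints_pi]
    exact fun j _ => by simpa [Set.extremePoints_Icc zero_le_one] using h01 i j
  refine inter_extremePoints_subset_extremePoints_of_subset ?_ ⟨hx, hcube⟩
  exact fun y hy i _ j _ => hS y hy i j

section assignmentMatrix

variable [DecidableEq n]

def assignmentMatrix (σ : m → n) : Matrix m n ℝ :=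
  of fun i j => if j = σ i then 1 else 0

@[simp]
lemma assignmentMatrix_apply (σ : m → n) (i : m) (j : n) :
    assignmentMatrix σ i j = if j = σ i then 1 else 0 :=
  rfl

lemma submatrix_permMatrix (σ : Equiv.Perm n) (f : m → n) :
    (σ.permMatrix ℝ).submatrix f id = assignmentMatrix (σ ∘ f) := by
  ext i j
  simp [Equiv.Perm.permMatrix, PEquiv.toMatrix_apply, eq_comm]

end assignmentMatrix

variable [Fintype m] [Fintype n] {x : Matrix m n ℝ}

def selectionPolytope (m n : Type*) [Fintype m] [Fintype n] : Set (Matrix m n ℝ) :=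
  {x | (∀ i j, 0 ≤ x i j) ∧ (∀ i, ∑ j, x i j = 1) ∧ (∀ j, ∑ i, x i j ≤ 1)}

lemma convex_selectionPolytope : Convex ℝ (selectionPolytope m n) := by
  rintro x ⟨hx0, hx1, hx2⟩ y ⟨hy0, hy1, hy2⟩ a b ha hb hab
  refine ⟨fun i j => ?_, fun i => ?_, fun j => ?_⟩ <;>
    simp only [Matrix.add_apply, Matrix.smul_apply, smul_eq_mul, sum_add_distrib, ← mul_sum]
  · have := hx0 i j
    have := hy0 i j
    positivity
  · rw [hx1, hy1]
    linarith
  · nlinarith [hx2 j, hy2 j]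

lemma sum_sum_of_mem_selectionPolytope (hx : x ∈ selectionPolytope m n) :
    ∑ j, ∑ i, x i j = Fintype.card m := by
  rw [sum_comm]
  simp [hx.2.1]

lemma card_le_card_of_mem_selectionPolytope (hx : x ∈ selectionPolytope m n) :
    Fintype.card m ≤ Fintype.card n := by
  have : ∑ j, ∑ i, x i j ≤ ∑ _j : n, (1 : ℝ) := sum_le_sum fun j _ => hx.2.2 j
  rw [sum_sum_of_mem_selectionPolytope hx, sum_const, card_univ, nsmul_one] at this
  exact_mod_cast this

lemma sum_col_of_mem_selectionPolytope_of_card_eq (hx : x ∈ selectionPolytope m n)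
    (hmn : Fintype.card m = Fintype.card n) (j : n) : ∑ i, x i j = 1 := by
  have htot : ∑ j, ∑ i, x i j = ∑ _j : n, (1 : ℝ) := by
    simp [sum_sum_of_mem_selectionPolytope hx, hmn]
  exact (sum_eq_sum_iff_of_le fun j _ => hx.2.2 j).1 htot j (mem_univ j)

lemma mem_Icc_of_mem_selectionPolytope (hx : x ∈ selectionPolytope m n) (i : m) (j : n) :
    x i j ∈ Set.Icc 0 1 :=
  ⟨hx.1 i j, (single_le_sum (fun k _ => hx.1 k j) (mem_univ i)).trans (hx.2.2 j)⟩

variable [DecidableEq n]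

lemma assignmentMatrix_mem_selectionPolytope {σ : m → n} (hσ : Injective σ) :
    assignmentMatrix σ ∈ selectionPolytope m n := by
  refine ⟨fun i j => by simp only [assignmentMatrix_apply]; positivity, fun i => by simp,
    fun j => ?_⟩
  have hcard : #{i | j = σ i} ≤ 1 :=
    card_le_one.2 fun a ha b hb => hσ ((mem_filter.1 ha).2.symm.trans (mem_filter.1 hb).2)
  simpa [sum_boole] using hcard

lemma assignmentMatrix_mem_extremePoints_selectionPolytope {σ : m → n} (hσ : Injective σ) :
    assignmentMatrix σ ∈ Set.extremePoints ℝ (selectionPolytope m n) :=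
  mem_extremePoints_of_forall_eq_zero_or_one (fun _ => mem_Icc_of_mem_selectionPolytope)
    (assignmentMatrix_mem_selectionPolytope hσ) fun i j => by
      simp only [assignmentMatrix_apply]
      split_ifs <;> simp

lemma exists_mem_doublyStochastic_submatrix_eq (hx : x ∈ selectionPolytope m n) (f : m ↪ n) :
    ∃ y ∈ doublyStochastic ℝ n, y.submatrix f id = x := by
  set s := univ.map f
  have hs : ∀ k, k ∈ s ↔ ∃ i, f i = k := by simp [s]
  set d : ℝ := (sᶜ.card : ℝ) with hd_def
  have hd : d + Fintype.card m = Fintype.card n := by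
    rw [hd_def, ← card_compl_add_card s, card_map, card_univ]
    push_cast
    rfl
  -- each of the `d` rows outside the range of `f` gets a `1 / d` share of every column deficit
  set y : Matrix n n ℝ :=
    of fun k j => extend f (x · j) (fun _ => (1 - ∑ i, x i j) / d) k
  have hy_range (i : m) (j : n) : y (f i) j = x i j := by
    simp [y, f.injective.extend_apply]
  have hy_compl {k : n} (hk : k ∈ sᶜ) (j : n) : y k j = (1 - ∑ i, x i j) / d := by
    simp only [y, of_apply]
    exact extend_apply' _ _ _ ((hs k).not.1 (mem_compl.1 hk))
  refine ⟨y, mem_doublyStochastic_iff_sum.2 ⟨fun k j => ?_, fun k => ?_, fun j => ?_⟩, ?_⟩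
  · by_cases hk : k ∈ s
    · obtain ⟨i, rfl⟩ := (hs k).1 hk
      rw [hy_range]
      exact hx.1 i j
    · rw [hy_compl (mem_compl.2 hk)]
      exact div_nonneg (sub_nonneg.2 (hx.2.2 j)) (Nat.cast_nonneg _)
  · by_cases hk : k ∈ s
    · obtain ⟨i, rfl⟩ := (hs k).1 hk
      simp only [hy_range]
      exact hx.2.1 i
    · have hd0 : d ≠ 0 := Nat.cast_ne_zero.2 (card_ne_zero.2 ⟨k, mem_compl.2 hk⟩)
      simp only [hy_compl (mem_compl.2 hk), ← sum_div, sum_sub_distrib,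
        sum_sum_of_mem_selectionPolytope hx, sum_const, card_univ, nsmul_one, ← hd,
        add_sub_cancel_right, div_self hd0]
  · rw [← sum_add_sum_compl s, sum_map, sum_congr rfl fun k hk => hy_compl hk j, sum_const,
      nsmul_eq_mul, ← hd_def]
    simp only [hy_range]
    rcases eq_or_ne d 0 with hd0 | hd0
    · rw [hd0, zero_mul, add_zero]
      rw [hd0, zero_add] at hd
      exact sum_col_of_mem_selectionPolytope_of_card_eq hx (by exact_mod_cast hd) j
    · rw [mul_div_cancel₀ _ hd0]
      ring
  · ext i j
    simp [hy_range]

lemma selectionPolytope_eq_convexHull_assignmentMatrix :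
    selectionPolytope m n =
      convexHull ℝ {assignmentMatrix σ | (σ : m → n) (_ : Injective σ)} := by
  refine (convexHull_min ?_ convex_selectionPolytope).antisymm' fun x hx => ?_
  · rintro _ ⟨σ, hσ, rfl⟩
    exact assignmentMatrix_mem_selectionPolytope hσ
  · obtain ⟨f⟩ := Embedding.nonempty_of_card_le (card_le_card_of_mem_selectionPolytope hx)
    obtain ⟨y, hy, rfl⟩ := exists_mem_doublyStochastic_submatrix_eq hx f
    have hlin : IsLinearMap ℝ fun z : Matrix n n ℝ => z.submatrix f id :=
      ⟨fun _ _ => rfl, fun _ _ => rfl⟩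
    rw [← SetLike.mem_coe, doublyStochastic_eq_convexHull_permMatrix] at hy
    refine convexHull_mono ?_ (hlin.image_convexHull _ ▸ Set.mem_image_of_mem _ hy)
    rintro _ ⟨_, ⟨σ, rfl⟩, rfl⟩
    exact ⟨σ ∘ f, σ.injective.comp f.injective, (submatrix_permMatrix σ f).symm⟩

lemma extremePoints_selectionPolytope :
    Set.extremePoints ℝ (selectionPolytope m n) =
      {assignmentMatrix σ | (σ : m → n) (_ : Injective σ)} := by
  refine subset_antisymm ?_ ?_
  · rw [selectionPolytope_eq_convexHull_assignmentMatrix]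
    exact extremePoints_convexHull_subset
  · rintro _ ⟨σ, hσ, rfl⟩
    exact assignmentMatrix_mem_extremePoints_selectionPolytope hσ

/-- Characterization of the extreme points of the relaxed selection polytope:
a matrix is an extreme point iff it is the 0-1 matrix of an injective assignment
`σ : Fin N → Fin J` of distinct services to requests. In particular, if the
polytope has an extreme point, then `N ≤ J`. -/
theorem stmt_9 (N J : ℕ)
    (P : Set (Matrix (Fin N) (Fin J) ℝ))
    (hP : P = {x | (∀ n j, 0 ≤ x n j) ∧ (∀ n, ∑ j, x n j = 1) ∧ (∀ j, ∑ n, x n j ≤ 1)}) :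
    (∀ x : Matrix (Fin N) (Fin J) ℝ,
      x ∈ Set.extremePoints ℝ P ↔
        ∃ σ : Fin N → Fin J, Function.Injective σ ∧
          ∀ n j, x n j = if j = σ n then 1 else 0) ∧
    ((Set.extremePoints ℝ P).Nonempty → N ≤ J) := by
  obtain rfl : P = selectionPolytope (Fin N) (Fin J) := hP
  refine ⟨fun x => ?_, fun ⟨x, hx⟩ => by
    simpa using card_le_card_of_mem_selectionPolytope hx.1⟩
  rw [extremePoints_selectionPolytope]
  simp [← Matrix.ext_iff, eq_comm]
end
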